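/- arXiv:2509.10410 — 3 statements merged into one kernel-verified Lean document; each statement's English description precedes it below -/
import Mathlib

section
/- Let α > 0 and define G(u) = (α − 1)e^{−4u} + (α/2)(e^{2u} − 3e^{−2u}) + 1. Then G(0) = 0, G(u) → +∞ as u → +∞, and G(u) ≥ 0 for every u ≥ 0. -/
/-! With `x = e^{-2u} ∈ (0, 1]` for `u ≥ 0`, the identity
`2x G = α (1 - x)² (1 + 2x) + 2x (1 - x)(1 + x)` exhibits `G` as a sum of nonnegative terms.
As `u → +∞` the term `(α/2) e^{2u}` dominates, while all other terms stay bounded. -/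

open Real Filter

noncomputable def reducedForm (α x : ℝ) : ℝ := (α - 1) * x ^ 2 + α / 2 * (x⁻¹ - 3 * x) + 1

lemma two_mul_mul_reducedForm (α x : ℝ) (hx : x ≠ 0) :
    2 * x * reducedForm α x =
      α * (1 - x) ^ 2 * (1 + 2 * x) + 2 * x * (1 - x) * (1 + x) := by
  unfold reducedForm
  field_simp
  ring

lemma reducedForm_nonneg {α x : ℝ} (hα : 0 ≤ α) (hx₀ : 0 < x) (hx₁ : x ≤ 1) :
    0 ≤ reducedForm α x := by
  have hsum : 0 ≤ α * (1 - x) ^ 2 * (1 + 2 * x) + 2 * x * (1 - x) * (1 + x) := by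
    have : 0 ≤ 1 - x := by linarith
    positivity
  rw [← two_mul_mul_reducedForm α x hx₀.ne'] at hsum
  exact nonneg_of_mul_nonneg_right hsum (by positivity)

lemma reducedForm_exp_neg_two_mul (α u : ℝ) :
    reducedForm α (exp (-2 * u)) =
      (α - 1) * exp (-4 * u) + α / 2 * (exp (2 * u) - 3 * exp (-2 * u)) + 1 := by
  rw [reducedForm, ← exp_neg, ← exp_nat_mul]
  ring_nf

lemma tendsto_reducedForm_exp_neg_two_mul_atTop {α : ℝ} (hα : 0 < α) :
    Tendsto (fun u ↦ reducedForm α (exp (-2 * u))) atTop atTop := by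
  simp only [reducedForm_exp_neg_two_mul]
  have hdecay : ∀ {c : ℝ}, 0 < c → Tendsto (fun u ↦ exp (-c * u)) atTop (nhds 0) := fun hc ↦
    tendsto_exp_comp_nhds_zero.mpr
      ((tendsto_const_mul_atBot_of_neg (neg_neg_of_pos hc)).mpr tendsto_id)
  have hgrowth : Tendsto (fun u ↦ α / 2 * exp (2 * u)) atTop atTop :=
    (tendsto_exp_atTop.comp (tendsto_id.const_mul_atTop two_pos)).const_mul_atTop (by positivity)
  have hbounded : Tendsto (fun u ↦ (α - 1) * exp (-4 * u) - α / 2 * (3 * exp (-2 * u)) + 1)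
      atTop (nhds ((α - 1) * 0 - α / 2 * (3 * 0) + 1)) :=
    (((hdecay four_pos).const_mul _).sub (((hdecay two_pos).const_mul 3).const_mul _)).add_const 1
  exact (hgrowth.atTop_add hbounded).congr fun u ↦ by ring

/-- For `α > 0` and
`G(u) = (α − 1)e^{−4u} + (α/2)(e^{2u} − 3e^{−2u}) + 1`, one has `G(0) = 0`,
`G(u) → +∞` as `u → +∞`, and `G(u) ≥ 0` for every `u ≥ 0`. -/
theorem stmt_1 (α : ℝ) (hα : 0 < α)
    (G : ℝ → ℝ)
    (hG : ∀ u : ℝ, G u =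
      (α - 1) * Real.exp (-4 * u) + (α / 2) * (Real.exp (2 * u) - 3 * Real.exp (-2 * u)) + 1) :
    G 0 = 0 ∧
    Filter.Tendsto G Filter.atTop Filter.atTop ∧
    (∀ u : ℝ, 0 ≤ u → 0 ≤ G u) := by
  refine ⟨by norm_num [hG]; ring, ?_, fun u hu ↦ ?_⟩
  · simpa only [reducedForm_exp_neg_two_mul, ← hG] using
      tendsto_reducedForm_exp_neg_two_mul_atTop hα
  · rw [hG, ← reducedForm_exp_neg_two_mul]
    exact reducedForm_nonneg hα.le (exp_pos _) (exp_le_one_iff.mpr (by linarith))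
end

section
/- (Lemma 1, maximum bound.) Fix real constants R₁, R₂ with 0 < R₁ < R₂, set L = log(R₂/R₁) and I = [0, L], fix α > 0, ω > 0, C > 0, μ ∈ ℝ and 0 < M₁ < M₂, and let f(y, u) = h(y, u) + g(y, u) as below. If u : I → ℝ is a C² function with u(y) > 0 on I satisfying (e^{−2y}u′(y))′ = f(y, u(y)) for y ∈ (0, L), u(0) = M₁ and u(L) = M₂, then u(y) ≤ max(M₂, (1/2) log((R₂²/C)e^{−μ−1} + 1)) for every y ∈ I. -/
/-!
At an interior maximum `y₀` of `u` the derivative `u'` vanishes, so if `(p u')' > 0` near `y₀`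
with `p > 0`, then `p u'`, hence `u'`, is positive just to the right of `y₀` and `u` keeps
increasing: `u` has no interior maximum where `(p u')' > 0`. For the equation at hand,
`(e^{-2y} u')' = f(y, u) > 0` as soon as `u` exceeds `K = max(M₂, ½ log((R₂²/C)e^{-μ-1} + 1))`:
the term `2e^{-2y}G(u)` is positive for `u > 0`, and the bound on `u` makes the logarithm in the
`ω²`-term larger than `2L - μ - 1 > 2y - μ - 1`. Since `u ≤ K` at both endpoints, `u ≤ K` on `I`.
-/

open Set Filter Topology Real

theorem not_isLocalMax_of_deriv_mul_deriv_pos {u p : ℝ → ℝ} {y₀ : ℝ}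
    (hu : ∀ᶠ t in 𝓝 y₀, ContinuousAt u t) (hp : ∀ᶠ t in 𝓝 y₀, 0 < p t)
    (hw : ∀ᶠ t in 𝓝 y₀, 0 < deriv (fun s => p s * deriv u s) t) :
    ¬ IsLocalMax u y₀ := by
  intro hmax
  obtain ⟨c, hy₀c, hsub⟩ := mem_nhdsGE_iff_exists_Icc_subset.mp
    (nhdsWithin_le_nhds (hu.and (hp.and (hw.and hmax))))
  have hy₀ : y₀ ∈ Icc y₀ c := left_mem_Icc.mpr hy₀c.le
  have hc : c ∈ Icc y₀ c := right_mem_Icc.mpr hy₀c.le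
  set w := fun s => p s * deriv u s
  -- `w' ≠ 0` already forces `w` to be differentiable, hence continuous.
  have hw_cont : ContinuousOn w (Icc y₀ c) := fun t ht =>
    (differentiableAt_of_deriv_ne_zero (hsub ht).2.2.1.ne').continuousAt.continuousWithinAt
  have hw_mono : StrictMonoOn w (Icc y₀ c) :=
    strictMonoOn_of_deriv_pos (convex_Icc y₀ c) hw_cont fun t ht =>
      (hsub (interior_subset ht)).2.2.1
  have hw₀ : w y₀ = 0 := by simp only [w, hmax.deriv_eq_zero, mul_zero]
  have hu_mono : StrictMonoOn u (Icc y₀ c) := by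
    refine strictMonoOn_of_deriv_pos (convex_Icc y₀ c)
      (fun t ht => (hsub ht).1.continuousWithinAt) fun t ht => ?_
    rw [interior_Icc] at ht
    have hwt : 0 < p t * deriv u t := hw₀ ▸ hw_mono hy₀ (Ioo_subset_Icc_self ht) ht.1
    exact pos_of_mul_pos_right hwt (hsub (Ioo_subset_Icc_self ht)).2.1.le
  exact (hu_mono hy₀ hc hy₀c).not_ge (hsub hc).2.2.2

theorem le_of_deriv_mul_deriv_pos {u p : ℝ → ℝ} {a b K : ℝ} (hu : ContinuousOn u (Icc a b))
    (hp : ∀ t ∈ Ioo a b, 0 < p t)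
    (hw : ∀ t ∈ Ioo a b, K < u t → 0 < deriv (fun s => p s * deriv u s) t)
    (ha : u a ≤ K) (hb : u b ≤ K) : ∀ y ∈ Icc a b, u y ≤ K := by
  intro y hy
  by_contra! hKy
  obtain ⟨y₀, hy₀I, hmax⟩ := isCompact_Icc.exists_isMaxOn ⟨y, hy⟩ hu
  have hKy₀ : K < u y₀ := hKy.trans_le (hmax hy)
  have hy₀ : y₀ ∈ Ioo a b :=
    ⟨hy₀I.1.lt_of_ne (by rintro rfl; linarith), hy₀I.2.lt_of_ne (by rintro rfl; linarith)⟩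
  have hnhds : Icc a b ∈ 𝓝 y₀ := Icc_mem_nhds hy₀.1 hy₀.2
  have hu_cont : ∀ᶠ t in 𝓝 y₀, ContinuousAt u t := by
    filter_upwards [Ioo_mem_nhds hy₀.1 hy₀.2] with t ht
    exact hu.continuousAt (Icc_mem_nhds ht.1 ht.2)
  refine not_isLocalMax_of_deriv_mul_deriv_pos (p := p) hu_cont ?_ ?_ (hmax.isLocalMax hnhds)
  · filter_upwards [Ioo_mem_nhds hy₀.1 hy₀.2] using hp
  · filter_upwards [Ioo_mem_nhds hy₀.1 hy₀.2, (hu.continuousAt hnhds).eventually_const_lt hKy₀]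
      with t ht hKt using hw t ht hKt

theorem exp_combination_pos {α v : ℝ} (hα : 0 ≤ α) (hv : 0 < v) :
    0 < (α - 1) * exp (-4 * v) + (α / 2) * (exp (2 * v) - 3 * exp (-2 * v)) + 1 := by
  have hb : 1 < exp (2 * v) := one_lt_exp_iff.mpr (by linarith)
  rw [show -4 * v = -(2 * v) * 2 by ring, exp_mul, show -2 * v = -(2 * v) by ring, exp_neg,
    rpow_two]
  set b := exp (2 * v)
  have hb₀ : 0 < b := by linarith
  have key : ((α - 1) * b⁻¹ ^ 2 + (α / 2) * (b - 3 * b⁻¹) + 1) * (2 * b ^ 2)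
      = α * ((b - 1) ^ 2 * (b + 2)) + 2 * (b ^ 2 - 1) := by
    field_simp
    ring
  have hrhs : 0 < α * ((b - 1) ^ 2 * (b + 2)) + 2 * (b ^ 2 - 1) := by
    have : 0 ≤ α * ((b - 1) ^ 2 * (b + 2)) := by positivity
    nlinarith
  exact pos_of_mul_pos_left (key ▸ hrhs) (by positivity)

theorem two_mul_log_div_lt_log {R₁ R₂ C μ v : ℝ} (hR₁ : 0 < R₁) (hR₂ : 0 < R₂) (hC : 0 < C)
    (hv : log (R₂ ^ 2 / C * exp (-μ - 1) + 1) < 2 * v) :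
    2 * log (R₂ / R₁) - μ - 1 < log (C * (exp (2 * v) - 1) / R₁ ^ 2) := by
  have hA : 0 < R₂ ^ 2 / C * exp (-μ - 1) := by positivity
  have hexp : R₂ ^ 2 / C * exp (-μ - 1) < exp (2 * v) - 1 := by
    have := (log_lt_iff_lt_exp (by linarith)).mp hv
    linarith
  calc 2 * log (R₂ / R₁) - μ - 1 = log ((R₂ / R₁) ^ 2 * exp (-μ - 1)) := by
        rw [log_mul (by positivity) (exp_ne_zero _), log_exp, log_pow]
        push_cast
        ring
    _ = log (C * (R₂ ^ 2 / C * exp (-μ - 1)) / R₁ ^ 2) := by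
        congr 1
        field_simp
    _ < log (C * (exp (2 * v) - 1) / R₁ ^ 2) := log_lt_log (by positivity) (by gcongr)

theorem stmt_5_general (R₁ R₂ : ℝ) (hR₁ : 0 < R₁) (hR : R₁ < R₂)
    (α ω C μ M₁ M₂ : ℝ) (hα : 0 < α) (hω : 0 < ω) (hC : 0 < C)
    (hM : M₁ < M₂)
    (L : ℝ) (hL : L = Real.log (R₂ / R₁))
    (f : ℝ → ℝ → ℝ)
    (hf : ∀ y u : ℝ, f y u =
      2 * Real.exp (-2 * y) *
        ((α - 1) * Real.exp (-4 * u) + (α / 2) * (Real.exp (2 * u) - 3 * Real.exp (-2 * u)) + 1)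
      + ω ^ 2 * (Real.log (C * (Real.exp (2 * u) - 1) / R₁ ^ 2) - 2 * y + μ + 1) *
          Real.exp (2 * u))
    (u : ℝ → ℝ)
    (hu : ContDiffOn ℝ 2 u (Set.Icc 0 L))
    (heq : ∀ y ∈ Set.Ioo (0 : ℝ) L,
      deriv (fun t => Real.exp (-2 * t) * deriv u t) y = f y (u y))
    (hbc0 : u 0 = M₁) (hbcL : u L = M₂) :
    ∀ y ∈ Set.Icc (0 : ℝ) L,
      u y ≤ max M₂ ((1 / 2) * Real.log ((R₂ ^ 2 / C) * Real.exp (-μ - 1) + 1)) := by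
  have hR₂ : 0 < R₂ := hR₁.trans hR
  have hlog_pos : 0 < log (R₂ ^ 2 / C * exp (-μ - 1) + 1) :=
    log_pos (by linarith [show 0 < R₂ ^ 2 / C * exp (-μ - 1) by positivity])
  refine le_of_deriv_mul_deriv_pos (p := fun t => exp (-2 * t)) hu.continuousOn
    (fun t _ => exp_pos _) (fun t ht hKu => ?_) (hbc0 ▸ hM.le.trans (le_max_left _ _))
    (hbcL ▸ le_max_left _ _)
  have hlog : log (R₂ ^ 2 / C * exp (-μ - 1) + 1) < 2 * u t := by
    linarith [(le_max_right _ _).trans_lt hKu]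
  have hbracket : 0 < log (C * (exp (2 * u t) - 1) / R₁ ^ 2) - 2 * t + μ + 1 := by
    linarith [two_mul_log_div_lt_log hR₁ hR₂ hC hlog, ht.2]
  rw [heq t ht, hf]
  have := exp_combination_pos hα.le (show 0 < u t by linarith)
  positivity

/-- Lemma 1, maximum bound: Fix `0 < R₁ < R₂`, `L = log(R₂/R₁)`,
`I = [0, L]`, constants `α, ω, C > 0`, `μ ∈ ℝ`, `0 < M₁ < M₂`, and let
`f(y,u) = 2e^{−2y}G(u) + ω²(log(C(e^{2u} − 1)/R₁²) − 2y + μ + 1)e^{2u}` with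
`G(u) = (α − 1)e^{−4u} + (α/2)(e^{2u} − 3e^{−2u}) + 1`.  If `u : I → ℝ` is a
C² function, positive on `I`, satisfying `(e^{−2y}u′(y))′ = f(y, u(y))` on
`(0, L)` with `u(0) = M₁`, `u(L) = M₂`, then
`u(y) ≤ max(M₂, (1/2)log((R₂²/C)e^{−μ−1} + 1))` on `I`. -/
theorem stmt_5 (R₁ R₂ : ℝ) (hR₁ : 0 < R₁) (hR : R₁ < R₂)
    (α ω C μ M₁ M₂ : ℝ) (hα : 0 < α) (hω : 0 < ω) (hC : 0 < C)
    (hM₁ : 0 < M₁) (hM : M₁ < M₂)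
    (L : ℝ) (hL : L = Real.log (R₂ / R₁))
    (f : ℝ → ℝ → ℝ)
    (hf : ∀ y u : ℝ, f y u =
      2 * Real.exp (-2 * y) *
        ((α - 1) * Real.exp (-4 * u) + (α / 2) * (Real.exp (2 * u) - 3 * Real.exp (-2 * u)) + 1)
      + ω ^ 2 * (Real.log (C * (Real.exp (2 * u) - 1) / R₁ ^ 2) - 2 * y + μ + 1) *
          Real.exp (2 * u))
    (u : ℝ → ℝ)
    (hu : ContDiffOn ℝ 2 u (Set.Icc 0 L))
    (hupos : ∀ y ∈ Set.Icc (0 : ℝ) L, 0 < u y)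
    (heq : ∀ y ∈ Set.Ioo (0 : ℝ) L,
      deriv (fun t => Real.exp (-2 * t) * deriv u t) y = f y (u y))
    (hbc0 : u 0 = M₁) (hbcL : u L = M₂) :
    ∀ y ∈ Set.Icc (0 : ℝ) L,
      u y ≤ max M₂ ((1 / 2) * Real.log ((R₂ ^ 2 / C) * Real.exp (-μ - 1) + 1)) :=
  stmt_5_general R₁ R₂ hR₁ hR α ω C μ M₁ M₂ hα hω hC hM L hL f hf u hu heq hbc0 hbcL
end

section
/- (Lemma 2, minimum bound.) Fix real constants R₁, R₂ with 0 < R₁ < R₂, set L = log(R₂/R₁) and I = [0, L], fix α > 0, ω > 0, C > 0, μ ∈ ℝ and 0 < M₁ < M₂, and let f(y, u) = h(y, u) + g(y, u) as below. Suppose u* > 0 is such that f(y, v) < 0 for every y ∈ I and every v with 0 < v ≤ u*. If u : I → ℝ is a C² function with u(y) > 0 on I satisfying (e^{−2y}u′(y))′ = f(y, u(y)) for y ∈ (0, L), u(0) = M₁ and u(L) = M₂, then u(y) ≥ min(M₁, u*) for every y ∈ I; in particular there exists u_min > 0 with u(y) ≥ u_min on I. -/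
/-!
If `u` dipped below `m = min M₁ u*`, it would do so at an interior minimum `x₀`, where
`w = e^{-2y} u'` vanishes while `w' = f(x₀, u x₀) < 0`. Then `w`, hence `u'`, is positive just
to the left of `x₀`, so `u` is strictly increasing there, contradicting minimality.
-/

open Set Filter Topology

theorem not_isLocalMin_of_eventually_deriv_pos_left {u : ℝ → ℝ} {x₀ : ℝ}
    (hc : ContinuousAt u x₀) (hd : ∀ᶠ x in 𝓝[<] x₀, 0 < deriv u x) : ¬IsLocalMin u x₀ := by
  intro hmin
  obtain ⟨a, ha, hsub⟩ :=
    (nhdsLT_basis x₀).eventually_iff.mp (hd.and (nhdsWithin_le_nhds hmin))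
  set x := (a + x₀) / 2
  have hxa : a < x := by simp only [x]; linarith
  have hxx₀ : x < x₀ := by simp only [x]; linarith
  have hcont : ContinuousOn u (Icc x x₀) := by
    intro t ht
    rcases ht.2.eq_or_lt with rfl | hlt
    · exact hc.continuousWithinAt
    · exact (differentiableAt_of_deriv_ne_zero
        (hsub ⟨hxa.trans_le ht.1, hlt⟩).1.ne').continuousAt.continuousWithinAt
  have hmono : StrictMonoOn u (Icc x x₀) := by
    refine strictMonoOn_of_deriv_pos (convex_Icc x x₀) hcont fun t ht => ?_
    rw [interior_Icc] at ht
    exact (hsub ⟨hxa.trans ht.1, ht.2⟩).1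
  have hlt : u x < u x₀ :=
    hmono ⟨le_rfl, hxx₀.le⟩ ⟨hxx₀.le, le_rfl⟩ hxx₀
  exact hlt.not_ge (hsub ⟨hxa, hxx₀⟩).2

theorem eventually_deriv_pos_left_of_deriv_mul_deriv_neg {u p : ℝ → ℝ} {x₀ : ℝ}
    (hp : ∀ᶠ x in 𝓝 x₀, 0 < p x) (h₀ : deriv u x₀ = 0)
    (hneg : deriv (fun t => p t * deriv u t) x₀ < 0) :
    ∀ᶠ x in 𝓝[<] x₀, 0 < deriv u x := by
  have hsign := eventually_nhdsWithin_sign_eq_of_deriv_neg hneg (by simp [h₀])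
  filter_upwards [nhdsWithin_le_nhds hsign, nhdsWithin_le_nhds hp, self_mem_nhdsWithin]
    with x hs hpx (hx : x < x₀)
  rw [sign_pos (sub_pos.mpr hx), sign_eq_one_iff] at hs
  exact pos_of_mul_pos_right hs hpx.le

theorem le_of_le_endpoints_of_deriv_mul_deriv_neg {u p : ℝ → ℝ} {a b m : ℝ}
    (hc : ContinuousOn u (Icc a b)) (hp : ∀ x ∈ Ioo a b, 0 < p x)
    (ha : m ≤ u a) (hb : m ≤ u b)
    (hneg : ∀ x ∈ Ioo a b, u x < m → deriv (fun t => p t * deriv u t) x < 0) :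
    ∀ x ∈ Icc a b, m ≤ u x := by
  intro x hx
  obtain ⟨x₀, hx₀, hmin⟩ := isCompact_Icc.exists_isMinOn ⟨x, hx⟩ hc
  refine le_trans ?_ (hmin hx)
  by_contra! hlt
  have hx₀' : x₀ ∈ Ioo a b :=
    ⟨hx₀.1.lt_of_ne (by rintro rfl; linarith), hx₀.2.lt_of_ne (by rintro rfl; linarith)⟩
  have hloc : IsLocalMin u x₀ := hmin.isLocalMin (Icc_mem_nhds hx₀'.1 hx₀'.2)
  refine not_isLocalMin_of_eventually_deriv_pos_left
    (hc.continuousAt (Icc_mem_nhds hx₀'.1 hx₀'.2)) ?_ hloc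
  exact eventually_deriv_pos_left_of_deriv_mul_deriv_neg
    (eventually_of_mem (Ioo_mem_nhds hx₀'.1 hx₀'.2) hp) hloc.deriv_eq_zero (hneg x₀ hx₀' hlt)

theorem stmt_6_general (M₁ M₂ : ℝ)
    (hM₁ : 0 < M₁) (hM : M₁ < M₂)
    (L : ℝ)
    (f : ℝ → ℝ → ℝ)
    (ustar : ℝ) (hustar : 0 < ustar)
    (hneg : ∀ y ∈ Set.Icc (0 : ℝ) L, ∀ v : ℝ, 0 < v → v ≤ ustar → f y v < 0)
    (u : ℝ → ℝ)
    (hu : ContDiffOn ℝ 2 u (Set.Icc 0 L))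
    (hupos : ∀ y ∈ Set.Icc (0 : ℝ) L, 0 < u y)
    (heq : ∀ y ∈ Set.Ioo (0 : ℝ) L,
      deriv (fun t => Real.exp (-2 * t) * deriv u t) y = f y (u y))
    (hbc0 : u 0 = M₁) (hbcL : u L = M₂) :
    (∀ y ∈ Set.Icc (0 : ℝ) L, min M₁ ustar ≤ u y) ∧
    ∃ umin : ℝ, 0 < umin ∧ ∀ y ∈ Set.Icc (0 : ℝ) L, umin ≤ u y := by
  have hmin : ∀ y ∈ Icc (0 : ℝ) L, min M₁ ustar ≤ u y := by
    refine le_of_le_endpoints_of_deriv_mul_deriv_neg (p := fun t => Real.exp (-2 * t))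
      hu.continuousOn (fun _ _ => Real.exp_pos _) (hbc0 ▸ min_le_left _ _)
      (hbcL ▸ (min_le_left _ _).trans hM.le) fun y hy hlt => ?_
    have hy' : y ∈ Icc 0 L := Ioo_subset_Icc_self hy
    rw [heq y hy]
    exact hneg y hy' (u y) (hupos y hy') (hlt.le.trans (min_le_right _ _))
  exact ⟨hmin, min M₁ ustar, lt_min hM₁ hustar, hmin⟩

/-- Lemma 2, minimum bound: with the same setting as Lemma 1,
suppose `u* > 0` is such that `f(y, v) < 0` for every `y ∈ I` and every
`0 < v ≤ u*`.  If `u` is a positive C² classical solution of the boundary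
value problem, then `u(y) ≥ min(M₁, u*)` on `I`; in particular there exists
`u_min > 0` with `u(y) ≥ u_min` on `I`. -/
theorem stmt_6 (R₁ R₂ : ℝ) (hR₁ : 0 < R₁) (hR : R₁ < R₂)
    (α ω C μ M₁ M₂ : ℝ) (hα : 0 < α) (hω : 0 < ω) (hC : 0 < C)
    (hM₁ : 0 < M₁) (hM : M₁ < M₂)
    (L : ℝ) (hL : L = Real.log (R₂ / R₁))
    (f : ℝ → ℝ → ℝ)
    (hf : ∀ y u : ℝ, f y u =
      2 * Real.exp (-2 * y) *
        ((α - 1) * Real.exp (-4 * u) + (α / 2) * (Real.exp (2 * u) - 3 * Real.exp (-2 * u)) + 1)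
      + ω ^ 2 * (Real.log (C * (Real.exp (2 * u) - 1) / R₁ ^ 2) - 2 * y + μ + 1) *
          Real.exp (2 * u))
    (ustar : ℝ) (hustar : 0 < ustar)
    (hneg : ∀ y ∈ Set.Icc (0 : ℝ) L, ∀ v : ℝ, 0 < v → v ≤ ustar → f y v < 0)
    (u : ℝ → ℝ)
    (hu : ContDiffOn ℝ 2 u (Set.Icc 0 L))
    (hupos : ∀ y ∈ Set.Icc (0 : ℝ) L, 0 < u y)
    (heq : ∀ y ∈ Set.Ioo (0 : ℝ) L,
      deriv (fun t => Real.exp (-2 * t) * deriv u t) y = f y (u y))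
    (hbc0 : u 0 = M₁) (hbcL : u L = M₂) :
    (∀ y ∈ Set.Icc (0 : ℝ) L, min M₁ ustar ≤ u y) ∧
    ∃ umin : ℝ, 0 < umin ∧ ∀ y ∈ Set.Icc (0 : ℝ) L, umin ≤ u y :=
  stmt_6_general M₁ M₂ hM₁ hM L f ustar hustar hneg u hu hupos heq hbc0 hbcL
end
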